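/- Let S = {π₁, …, π_m} be a multiset of permutations in S_n, and let τ_i ∈ S_{2m} be the identity of [2m] with symbols 2i−1 and 2i swapped. Define S' = {π_i ∘ Δ_n(τ_i) : i ∈ [m]}, permutations of [n+2m]. Then for every integer k: there exists π* ∈ S_n with Σ_{π∈S} d_U(π*, π) ≤ k if and only if there exists π*' ∈ S_{n+2m} with Σ_{π'∈S'} d_U(π*', π') ≤ k + m. -/

import Mathlib

/-!
Appending the identity on the shifted symbols `n+1, …, n+2m` to a median `π*` of `S` costs
one adjacent transposition per `τ_i`, hence at most `m` in total. Conversely, restricting `π*'`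
to the symbols `≤ n` and to those `> n` can only decrease the sum of the two Ulam distances, and
splits `π*'` into some `σ ∈ S_n` and a permutation `ρ` of the shifted symbols. Two distinct `τ_i`
invert disjoint pairs, so they are at Ulam distance at least `2`; hence `ρ` is at total distance
at least `m` from the shifted `τ_i` (either `ρ` differs from all of them, or it equals one and is
at distance `≥ 2` from the other `m - 1 ≥ 1`), leaving `Σ d_U(σ, π_i) ≤ k`. For `m = 1` the
witness `π_1` itself works.
-/

/-- Length of a longest common subsequence of two strings (lists over ℕ). -/
noncomputable def LCS (x y : List ℕ) : ℕ :=
  sSup {k | ∃ s : List ℕ, s.Sublist x ∧ s.Sublist y ∧ s.length = k}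

/-- Ulam distance between permutations, via `d_U(σ,τ) = |σ| − LCS(σ,τ)`. -/
noncomputable def ulamDist (x y : List ℕ) : ℕ := x.length - LCS x y

/-- `π` is a permutation of `[n] = {1,…,n}` viewed as a string. -/
def IsPermOf (n : ℕ) (π : List ℕ) : Prop := π.Perm (List.range' 1 n)

/-- `Δ_n(s)`: add `n` to every symbol of `s`. -/
def shift (n : ℕ) (s : List ℕ) : List ℕ := s.map (· + n)

lemma LCS_set_nonempty (x y : List ℕ) :
    {k | ∃ s : List ℕ, s.Sublist x ∧ s.Sublist y ∧ s.length = k}.Nonempty :=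
  ⟨0, [], List.nil_sublist x, List.nil_sublist y, rfl⟩

lemma LCS_set_bddAbove (x y : List ℕ) :
    BddAbove {k | ∃ s : List ℕ, s.Sublist x ∧ s.Sublist y ∧ s.length = k} :=
  ⟨x.length, fun _ ⟨_, hs, _, hl⟩ => hl ▸ hs.length_le⟩

lemma exists_sublist_length_eq_LCS (x y : List ℕ) :
    ∃ s : List ℕ, s.Sublist x ∧ s.Sublist y ∧ s.length = LCS x y :=
  Nat.sSup_mem (LCS_set_nonempty x y) (LCS_set_bddAbove x y)

lemma length_le_LCS {x y s : List ℕ} (hx : s.Sublist x) (hy : s.Sublist y) :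
    s.length ≤ LCS x y :=
  le_csSup (LCS_set_bddAbove x y) ⟨s, hx, hy, rfl⟩

lemma LCS_le_of_forall_sublist {x y : List ℕ} {c : ℕ}
    (h : ∀ s : List ℕ, s.Sublist x → s.Sublist y → s.length ≤ c) : LCS x y ≤ c :=
  csSup_le (LCS_set_nonempty x y) fun _ ⟨s, hx, hy, hl⟩ => hl ▸ h s hx hy

lemma LCS_le_length_left (x y : List ℕ) : LCS x y ≤ x.length :=
  LCS_le_of_forall_sublist fun _ hx _ => hx.length_le

lemma LCS_self (x : List ℕ) : LCS x x = x.length :=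
  (LCS_le_length_left x x).antisymm (length_le_LCS (List.Sublist.refl x) (List.Sublist.refl x))

lemma LCS_add_LCS_le_LCS_append (x y u v : List ℕ) :
    LCS x y + LCS u v ≤ LCS (x ++ u) (y ++ v) := by
  obtain ⟨s, hsx, hsy, hs⟩ := exists_sublist_length_eq_LCS x y
  obtain ⟨t, htu, htv, ht⟩ := exists_sublist_length_eq_LCS u v
  simpa [hs, ht] using length_le_LCS (hsx.append htu) (hsy.append htv)

lemma LCS_le_LCS_filter_add_LCS_filter (x y : List ℕ) (p : ℕ → Bool) :
    LCS x y ≤ LCS (x.filter p) (y.filter p) + LCS (x.filter (!p ·)) (y.filter (!p ·)) := by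
  obtain ⟨s, hsx, hsy, hs⟩ := exists_sublist_length_eq_LCS x y
  have h₁ := length_le_LCS (hsx.filter p) (hsy.filter p)
  have h₂ := length_le_LCS (hsx.filter (!p ·)) (hsy.filter (!p ·))
  have := List.length_eq_length_filter_add (l := s) p
  omega

lemma LCS_map_of_injective {f : ℕ → ℕ} (hf : Function.Injective f) (x y : List ℕ) :
    LCS (x.map f) (y.map f) = LCS x y := by
  apply le_antisymm
  · refine LCS_le_of_forall_sublist fun s hsx hsy => ?_
    obtain ⟨t, htx, rfl⟩ := List.sublist_map_iff.1 hsx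
    obtain ⟨t', hty, ht⟩ := List.sublist_map_iff.1 hsy
    rw [← List.map_injective_iff.2 hf ht] at hty
    simpa using length_le_LCS htx hty
  · obtain ⟨s, hsx, hsy, hs⟩ := exists_sublist_length_eq_LCS x y
    simpa [hs] using length_le_LCS (hsx.map f) (hsy.map f)

lemma LCS_pair_swap_le_one {u v : ℕ} (huv : u ≠ v) : LCS [u, v] [v, u] ≤ 1 :=
  LCS_le_of_forall_sublist fun s h₁ h₂ => by
    by_contra! hs
    have hs₂ : s.length = 2 := le_antisymm (by simpa using h₁.length_le) hs
    have := (h₁.eq_of_length (by simp [hs₂])).symm.trans (h₂.eq_of_length (by simp [hs₂]))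
    simp_all

/-- A common subsequence keeps at most one element of a pair that appears in opposite orders. -/
lemma LCS_le_of_filter_eq_pair {x y : List ℕ} {p : ℕ → Bool} {u v : ℕ} (huv : u ≠ v)
    (hx : x.filter p = [u, v]) (hy : y.filter p = [v, u]) :
    LCS x y ≤ 1 + LCS (x.filter (!p ·)) (y.filter (!p ·)) := by
  have := LCS_le_LCS_filter_add_LCS_filter x y p
  rw [hx, hy] at this
  have := LCS_pair_swap_le_one huv
  omega

lemma ulamDist_self (x : List ℕ) : ulamDist x x = 0 := by
  rw [ulamDist, LCS_self, Nat.sub_self]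

lemma one_le_ulamDist {x y : List ℕ} (hl : x.length = y.length) (hne : x ≠ y) :
    1 ≤ ulamDist x y := by
  obtain ⟨s, hsx, hsy, hs⟩ := exists_sublist_length_eq_LCS x y
  have hlt : LCS x y < x.length := by
    refine (LCS_le_length_left x y).lt_of_ne fun h => hne ?_
    rw [← hsx.eq_of_length (by omega), hsy.eq_of_length (by omega)]
  rw [ulamDist]
  omega

lemma ulamDist_append_le (x y u v : List ℕ) :
    ulamDist (x ++ u) (y ++ v) ≤ ulamDist x y + ulamDist u v := by
  have := LCS_add_LCS_le_LCS_append x y u v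
  have := LCS_le_length_left x y
  have := LCS_le_length_left u v
  simp only [ulamDist, List.length_append]
  omega

lemma ulamDist_filter_add_ulamDist_filter_le (x y : List ℕ) (p : ℕ → Bool) :
    ulamDist (x.filter p) (y.filter p) + ulamDist (x.filter (!p ·)) (y.filter (!p ·)) ≤
      ulamDist x y := by
  have := LCS_le_LCS_filter_add_LCS_filter x y p
  have := LCS_le_length_left (x.filter p) (y.filter p)
  have := LCS_le_length_left (x.filter (!p ·)) (y.filter (!p ·))
  have := List.length_eq_length_filter_add (l := x) p
  simp only [ulamDist]
  omega

lemma ulamDist_shift (n : ℕ) (x y : List ℕ) :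
    ulamDist (shift n x) (shift n y) = ulamDist x y := by
  simp only [ulamDist, shift, List.length_map, LCS_map_of_injective (add_left_injective n)]

lemma le_sum_of_separated {α : Type*} {m : ℕ} (hm : m ≠ 1) (d : α → α → ℕ) (x : Fin m → α)
    (y : α) (hne : ∀ i, y ≠ x i → 1 ≤ d y (x i)) (hsep : ∀ i j, i ≠ j → 2 ≤ d (x i) (x j)) :
    m ≤ ∑ i, d y (x i) := by
  by_cases h : ∃ j, y = x j
  · obtain ⟨j, rfl⟩ := h
    have : 2 ≤ m := by have := j.pos; omega
    calc m ≤ (Finset.univ.erase j).card • 2 := by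
          rw [Finset.card_erase_of_mem (Finset.mem_univ j)]; simp; omega
      _ ≤ ∑ i ∈ Finset.univ.erase j, d (x j) (x i) :=
          Finset.card_nsmul_le_sum _ _ _ fun i hi => hsep j i (Finset.ne_of_mem_erase hi).symm
      _ ≤ ∑ i, d (x j) (x i) := Finset.sum_le_sum_of_subset (Finset.subset_univ _)
  · simp only [not_exists] at h
    calc m = (Finset.univ : Finset (Fin m)).card • 1 := by simp
      _ ≤ ∑ i, d y (x i) := Finset.card_nsmul_le_sum _ _ _ fun i _ => hne i (h i)

section Swap

variable {u v : ℕ}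

def isPair (u v x : ℕ) : Bool := x = u || x = v

lemma map_swap_of_forall_ne {l : List ℕ} (h : ∀ x ∈ l, x ≠ u ∧ x ≠ v) :
    l.map (Equiv.swap u v) = l :=
  (List.map_congr_left fun x hx => Equiv.swap_apply_of_ne_of_ne (h x hx).1 (h x hx).2).trans
    (List.map_id l)

lemma map_swap_append_cons_cons {L R : List ℕ} (h : ∀ x ∈ L ++ R, x ≠ u ∧ x ≠ v) :
    (L ++ u :: v :: R).map (Equiv.swap u v) = L ++ v :: u :: R := by
  simp only [List.mem_append] at h
  simp [map_swap_of_forall_ne fun x hx => h x (Or.inl hx),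
    map_swap_of_forall_ne fun x hx => h x (Or.inr hx)]

lemma filter_isPair_append_cons_cons {L R : List ℕ} (h : ∀ x ∈ L ++ R, x ≠ u ∧ x ≠ v) :
    (L ++ u :: v :: R).filter (isPair u v) = [u, v] := by
  have hnil : ∀ l : List ℕ, (∀ x ∈ l, x ≠ u ∧ x ≠ v) → l.filter (isPair u v) = [] :=
    fun l hl => List.filter_eq_nil_iff.2 fun x hx => by simp [isPair, hl x hx]
  simp only [List.mem_append] at h
  simp [hnil L fun x hx => h x (Or.inl hx), hnil R fun x hx => h x (Or.inr hx), isPair]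

lemma ulamDist_append_cons_cons_map_swap_le_one {L R : List ℕ}
    (h : ∀ x ∈ L ++ R, x ≠ u ∧ x ≠ v) :
    ulamDist (L ++ u :: v :: R) ((L ++ u :: v :: R).map (Equiv.swap u v)) ≤ 1 := by
  rw [map_swap_append_cons_cons h]
  have hsub₁ : (L ++ u :: R).Sublist (L ++ u :: v :: R) := by simp
  have hsub₂ : (L ++ u :: R).Sublist (L ++ v :: u :: R) := by simp
  have := length_le_LCS hsub₁ hsub₂
  simp only [ulamDist, List.length_append, List.length_cons] at this ⊢
  omega

lemma filter_map_swap {p : ℕ → Bool} (hp : ∀ x, p (Equiv.swap u v x) = p x) (l : List ℕ) :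
    (l.map (Equiv.swap u v)).filter p = (l.filter p).map (Equiv.swap u v) := by
  rw [List.filter_map]
  exact congrArg _ (List.filter_congr fun x _ => hp x)

lemma isPair_swap (x : ℕ) : isPair u v (Equiv.swap u v x) = isPair u v x := by
  simp only [isPair, Equiv.swap_apply_eq_iff, Equiv.swap_apply_left, Equiv.swap_apply_right,
    Bool.or_comm]

lemma isPair_swap_of_ne {u' v' : ℕ} (hu : u ≠ u' ∧ u ≠ v') (hv : v ≠ u' ∧ v ≠ v') (x : ℕ) :
    isPair u v (Equiv.swap u' v' x) = isPair u v x := by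
  simp only [isPair, Equiv.swap_apply_eq_iff, Equiv.swap_apply_of_ne_of_ne hu.1 hu.2,
    Equiv.swap_apply_of_ne_of_ne hv.1 hv.2]

lemma filter_isPair_map_swap {l : List ℕ} (hl : l.filter (isPair u v) = [u, v]) :
    (l.map (Equiv.swap u v)).filter (isPair u v) = [v, u] := by
  simp [filter_map_swap isPair_swap, hl]

lemma filter_not_isPair_map_swap (l : List ℕ) :
    (l.map (Equiv.swap u v)).filter (!isPair u v ·) = l.filter (!isPair u v ·) := by
  rw [filter_map_swap (by simp only [isPair_swap, implies_true]), map_swap_of_forall_ne]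
  intro x hx
  simpa [isPair] using (List.mem_filter.1 hx).2

lemma length_filter_not_isPair {l : List ℕ} (hl : l.filter (isPair u v) = [u, v]) :
    (l.filter (!isPair u v ·)).length + 2 = l.length := by
  have := List.length_eq_length_filter_add (l := l) (isPair u v)
  simp only [hl, List.length_cons, List.length_nil] at this
  omega

lemma LCS_map_swap_add_one_le (huv : u ≠ v) {l : List ℕ}
    (hl : l.filter (isPair u v) = [u, v]) :
    LCS l (l.map (Equiv.swap u v)) + 1 ≤ l.length := by
  have hLCS := LCS_le_of_filter_eq_pair huv hl (filter_isPair_map_swap hl)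
  rw [filter_not_isPair_map_swap] at hLCS
  have := LCS_le_length_left (l.filter (!isPair u v ·)) (l.filter (!isPair u v ·))
  have := length_filter_not_isPair hl
  omega

/-- The two transpositions invert disjoint pairs; a common subsequence loses one element of each. -/
lemma LCS_map_swap_map_swap_add_two_le {u' v' : ℕ} (huv : u ≠ v) (huv' : u' ≠ v')
    (hu : u ≠ u' ∧ u ≠ v') (hv : v ≠ u' ∧ v ≠ v') {l : List ℕ}
    (hl : l.filter (isPair u v) = [u, v]) (hl' : l.filter (isPair u' v') = [u', v']) :
    LCS (l.map (Equiv.swap u v)) (l.map (Equiv.swap u' v')) + 2 ≤ l.length := by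
  have hpair' : (l.map (Equiv.swap u' v')).filter (isPair u v) = [u, v] := by
    simp [filter_map_swap (isPair_swap_of_ne hu hv), hl, Equiv.swap_apply_of_ne_of_ne hu.1 hu.2,
      Equiv.swap_apply_of_ne_of_ne hv.1 hv.2]
  have hrest' : (l.map (Equiv.swap u' v')).filter (!isPair u v ·) =
      (l.filter (!isPair u v ·)).map (Equiv.swap u' v') :=
    filter_map_swap (by simp only [isPair_swap_of_ne hu hv, implies_true]) l
  have hl₀ : (l.filter (!isPair u v ·)).filter (isPair u' v') = [u', v'] := by
    rw [List.filter_filter, ← hl']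
    refine List.filter_congr fun x _ => ?_
    by_cases hx : x = u' ∨ x = v'
    · rcases hx with rfl | rfl <;> simp [isPair, hu.1.symm, hu.2.symm, hv.1.symm, hv.2.symm]
    · simp_all [isPair]
  have hLCS := LCS_le_of_filter_eq_pair huv.symm (filter_isPair_map_swap hl) hpair'
  rw [filter_not_isPair_map_swap, hrest'] at hLCS
  have := LCS_map_swap_add_one_le huv' hl₀
  have := length_filter_not_isPair hl
  omega

end Swap

section AdjacentSwap

variable {N a : ℕ}

lemma exists_range'_eq_append_cons_cons (ha : 1 ≤ a) (haN : a + 1 ≤ N) :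
    ∃ L R, List.range' 1 N = L ++ a :: (a + 1) :: R ∧ ∀ x ∈ L ++ R, x ≠ a ∧ x ≠ a + 1 := by
  refine ⟨List.range' 1 (a - 1), List.range' (a + 2) (N - a - 1), ?_, ?_⟩
  · obtain ⟨k, rfl⟩ : ∃ k, N = (a - 1) + 2 + k := ⟨N - a - 1, by omega⟩
    rw [← List.range'_append, ← List.range'_append]
    simp [List.range'_succ, show 1 + (a - 1) = a by omega]
    omega
  · intro x hx
    simp only [List.mem_append, List.mem_range'_1] at hx
    omega

lemma isPermOf_range'_map_swap (ha : 1 ≤ a) (haN : a + 1 ≤ N) :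
    IsPermOf N ((List.range' 1 N).map (Equiv.swap a (a + 1))) := by
  obtain ⟨L, R, hLR, h⟩ := exists_range'_eq_append_cons_cons ha haN
  rw [IsPermOf, hLR, map_swap_append_cons_cons h]
  exact (List.Perm.swap _ _ _).append_left L

lemma ulamDist_range'_map_swap_le_one (ha : 1 ≤ a) (haN : a + 1 ≤ N) :
    ulamDist (List.range' 1 N) ((List.range' 1 N).map (Equiv.swap a (a + 1))) ≤ 1 := by
  obtain ⟨L, R, hLR, h⟩ := exists_range'_eq_append_cons_cons ha haN
  rw [hLR]
  exact ulamDist_append_cons_cons_map_swap_le_one h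

lemma filter_isPair_range' (ha : 1 ≤ a) (haN : a + 1 ≤ N) :
    (List.range' 1 N).filter (isPair a (a + 1)) = [a, a + 1] := by
  obtain ⟨L, R, hLR, h⟩ := exists_range'_eq_append_cons_cons ha haN
  rw [hLR]
  exact filter_isPair_append_cons_cons h

lemma two_le_ulamDist_range'_map_swap {b : ℕ} (ha : 1 ≤ a) (haN : a + 1 ≤ N) (hb : 1 ≤ b)
    (hbN : b + 1 ≤ N) (hab : a + 2 ≤ b ∨ b + 2 ≤ a) :
    2 ≤ ulamDist ((List.range' 1 N).map (Equiv.swap a (a + 1)))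
      ((List.range' 1 N).map (Equiv.swap b (b + 1))) := by
  have := LCS_map_swap_map_swap_add_two_le (by omega) (by omega) (by omega) (by omega)
    (filter_isPair_range' ha haN) (filter_isPair_range' hb hbN)
  simp only [ulamDist, List.length_map, List.length_range'] at this ⊢
  omega

lemma le_sum_ulamDist_shift_map_swap {n m : ℕ} (hm : m ≠ 1) {ρ : List ℕ}
    (hρ : ρ.length = 2 * m) :
    m ≤ ∑ i : Fin m,
      ulamDist ρ
        (shift n ((List.range' 1 (2 * m)).map (Equiv.swap (2 * i.val + 1) (2 * i.val + 2)))) := by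
  refine le_sum_of_separated hm ulamDist _ ρ (fun i hne => one_le_ulamDist ?_ hne)
    fun i j hij => ?_
  · simp [shift, hρ]
  · rw [ulamDist_shift]
    have : i.val ≠ j.val := Fin.val_ne_of_ne hij
    exact two_le_ulamDist_range'_map_swap (by omega) (by omega) (by omega) (by omega) (by omega)

end AdjacentSwap

lemma shift_range' (n s N : ℕ) : shift n (List.range' s N) = List.range' (n + s) N := by
  simp only [shift, Nat.add_comm _ n, List.map_add_range']

lemma range'_add_eq_append_shift (n N : ℕ) :
    List.range' 1 (n + N) = List.range' 1 n ++ shift n (List.range' 1 N) := by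
  rw [shift_range', ← List.range'_append, Nat.one_mul, Nat.add_comm]

lemma isPermOf_append_shift {n N : ℕ} {x y : List ℕ} (hx : IsPermOf n x) (hy : IsPermOf N y) :
    IsPermOf (n + N) (x ++ shift n y) := by
  rw [IsPermOf, range'_add_eq_append_shift]
  exact hx.append (hy.map _)

lemma filter_append_shift {n N : ℕ} {x y : List ℕ} (hx : IsPermOf n x) (hy : IsPermOf N y) :
    (x ++ shift n y).filter (· ≤ n) = x ∧
      (x ++ shift n y).filter (fun a => !decide (a ≤ n)) = shift n y := by
  have hxn : ∀ a ∈ x, a ≤ n := fun a ha => by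
    have := List.mem_range'_1.1 (hx.mem_iff.1 ha)
    omega
  have hyn : ∀ a ∈ shift n y, n < a := fun a ha => by
    obtain ⟨b, hb, rfl⟩ := List.mem_map.1 ha
    have := List.mem_range'_1.1 (hy.mem_iff.1 hb)
    omega
  constructor
  · rw [List.filter_append, List.filter_eq_self.2 (by simpa using hxn),
      List.filter_eq_nil_iff.2 (by simpa using hyn), List.append_nil]
  · rw [List.filter_append, List.filter_eq_nil_iff.2 (by simpa using hxn),
      List.filter_eq_self.2 (by simpa using hyn), List.nil_append]

lemma IsPermOf.filter_le {n N : ℕ} {z : List ℕ} (hz : IsPermOf (n + N) z) :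
    IsPermOf n (z.filter (· ≤ n)) ∧ (z.filter (fun a => !decide (a ≤ n))).length = N := by
  obtain ⟨hlow, hhigh⟩ := filter_append_shift (List.Perm.refl (List.range' 1 n))
    (List.Perm.refl (List.range' 1 N))
  rw [IsPermOf, range'_add_eq_append_shift] at hz
  have hlow' := hz.filter (· ≤ n)
  have hhigh' := (hz.filter (fun a => !decide (a ≤ n))).length_eq
  rw [hlow] at hlow'
  rw [hhigh, shift_range', List.length_range'] at hhigh'
  exact ⟨hlow', hhigh'⟩

theorem multisets_to_sets (n m : ℕ) (π : Fin m → List ℕ)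
    (hπ : ∀ i, IsPermOf n (π i))
    (τ : Fin m → List ℕ)
    (hτ : ∀ i : Fin m, τ i =
      (List.range' 1 (2 * m)).map (Equiv.swap (2 * i.val + 1) (2 * i.val + 2)))
    (k : ℕ) :
    (∃ πs : List ℕ, IsPermOf n πs ∧ ∑ i, ulamDist πs (π i) ≤ k) ↔
    (∃ πs' : List ℕ, IsPermOf (n + 2 * m) πs' ∧
      ∑ i, ulamDist πs' (π i ++ shift n (τ i)) ≤ k + m) := by
  have hτ_perm i : IsPermOf (2 * m) (τ i) :=
    hτ i ▸ isPermOf_range'_map_swap (by omega) (by omega)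
  constructor
  · rintro ⟨πs, hπs, hsum⟩
    refine ⟨πs ++ shift n (List.range' 1 (2 * m)), isPermOf_append_shift hπs (.refl _), ?_⟩
    calc _ ≤ ∑ i, (ulamDist πs (π i) + 1) := Finset.sum_le_sum fun i _ => by
          refine (ulamDist_append_le _ _ _ _).trans (Nat.add_le_add_left ?_ _)
          rw [ulamDist_shift, hτ]
          exact ulamDist_range'_map_swap_le_one (by omega) (by omega)
      _ ≤ k + m := by simpa [Finset.sum_add_distrib] using hsum
  · rintro ⟨πs', hπs', hsum⟩
    rcases eq_or_ne m 1 with rfl | hm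
    · exact ⟨π 0, hπ 0, by simp [ulamDist_self]⟩
    obtain ⟨hlow, hhigh⟩ := hπs'.filter_le
    refine ⟨_, hlow, ?_⟩
    have hsplit : ∀ i, ulamDist (πs'.filter (· ≤ n)) (π i) +
        ulamDist (πs'.filter (fun a => !decide (a ≤ n))) (shift n (τ i)) ≤
          ulamDist πs' (π i ++ shift n (τ i)) := fun i => by
      obtain ⟨hlow_i, hhigh_i⟩ := filter_append_shift (hπ i) (hτ_perm i)
      have := ulamDist_filter_add_ulamDist_filter_le πs' (π i ++ shift n (τ i)) (· ≤ n)
      rwa [hlow_i, hhigh_i] at this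
    have hlarge := le_sum_ulamDist_shift_map_swap (n := n) hm hhigh
    simp only [← hτ] at hlarge
    have := (Finset.sum_le_sum fun i _ => hsplit i).trans hsum
    rw [Finset.sum_add_distrib] at this
    omega
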